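/- Let U be uniformly distributed on (0,1), let F0 and F1 be cumulative distribution functions with quantile functions Q0 and Q1 satisfying Q1(u) ≤ Q0(u) for all u ∈ (0,1), and set h0 := Q0(U), h1 := Q1(U). Fix k ∈ ℝ and suppose: F0 is differentiable at k with F0(k) ∈ (0,1) and f0(k) := F0'(k) > 0 and ln F0 is concave on {F0 > 0}; F1 is differentiable at k with F1(k) ∈ (0,1) and f1(k) := F1'(k) > 0 and ln(1 − F1) is concave on {F1 < 1}; and B := F1(k) − F0(k) > 0. Then E[h0 − h1 | h1 ≤ k ≤ h0] ≥ g(F0(k), f0(k), B) + g(1 − F1(k), f1(k), B). -/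

import Mathlib

/-!
Up to a null set, the buncher event `h1 ≤ k ≤ h0` is `U ∈ (F0 k, F1 k]`, so the denominator is
`B` and the numerator is `∫_{F0 k}^{F1 k} (Q0 - Q1)`. Log-concavity of `F0` keeps `ln F0` below
its tangent at `k`, which inverts to `Q0 u ≥ k + (F0 k / f0) ln (u / F0 k)`; likewise
log-concavity of `1 - F1` gives `Q1 u ≤ k - ((1 - F1 k) / f1) ln ((1 - u) / (1 - F1 k))`.
Integrating the gap between these two bounds over `(F0 k, F1 k]` gives exactly
`B · (g(F0 k, f0, B) + g(1 - F1 k, f1, B))`, because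
`x · g(a, b, x) = (a / b) ∫_a^{a+x} ln (v / a) dv`.
-/

open MeasureTheory

/-- A cumulative distribution function: monotone, right-continuous, with limits
0 at `-∞` and 1 at `+∞`. -/
def IsCDF (F : ℝ → ℝ) : Prop :=
  Monotone F ∧ (∀ x, ContinuousWithinAt F (Set.Ici x) x) ∧
    Filter.Tendsto F Filter.atBot (nhds 0) ∧ Filter.Tendsto F Filter.atTop (nhds 1)

/-- The quantile function of a CDF: `Q(u) = inf {x | F x ≥ u}`. -/
noncomputable def quantile (F : ℝ → ℝ) (u : ℝ) : ℝ := sInf {x | u ≤ F x}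

/-- The function `g(a,b,x) = (a/(b·x))·(a+x)·ln(1 + x/a) - a/b` from the
paper's Theorem 1. -/
noncomputable def g (a b x : ℝ) : ℝ :=
  a / (b * x) * (a + x) * Real.log (1 + x / a) - a / b

open Set Real

lemma ConcaveOn.le_tangent_of_hasDerivAt {s : Set ℝ} {f : ℝ → ℝ} {x y f' : ℝ}
    (hf : ConcaveOn ℝ s f) (hx : x ∈ s) (hy : y ∈ s) (hd : HasDerivAt f f' x) :
    f y ≤ f x + f' * (y - x) := by
  rcases lt_trichotomy y x with hyx | rfl | hxy
  · have := hf.le_slope_of_hasDerivAt hy hx hyx hd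
    rw [slope_def_field, le_div_iff₀ (sub_pos.2 hyx)] at this
    linarith
  · simp
  · have := hf.slope_le_of_hasDerivAt hx hy hxy hd
    rw [slope_def_field, div_le_iff₀ (sub_pos.2 hxy)] at this
    linarith

namespace IsCDF

variable {F : ℝ → ℝ} {u x k : ℝ}

lemma nonempty_setOf_le (hF : IsCDF F) (hu : u < 1) : {x | u ≤ F x}.Nonempty :=
  let ⟨x, hx⟩ := (hF.2.2.2.eventually (eventually_gt_nhds hu)).exists
  ⟨x, hx.le⟩

lemma bddBelow_setOf_le (hF : IsCDF F) (hu : 0 < u) : BddBelow {x | u ≤ F x} := by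
  obtain ⟨x₀, hx₀⟩ := Filter.eventually_atBot.1 (hF.2.2.1.eventually (eventually_lt_nhds hu))
  exact ⟨x₀, fun z hz => le_of_not_gt fun hzx => (hx₀ z hzx.le).not_ge hz⟩

lemma le_apply_quantile (hF : IsCDF F) (hu : u ∈ Ioo 0 1) : u ≤ F (quantile F u) := by
  refine ge_of_tendsto ((hF.2.1 _).mono Ioi_subset_Ici_self) ?_
  filter_upwards [self_mem_nhdsWithin] with y hy
  obtain ⟨s, hs, hsy⟩ := exists_lt_of_csInf_lt (hF.nonempty_setOf_le hu.2) hy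
  exact hs.trans (hF.1 hsy.le)

lemma quantile_le_iff (hF : IsCDF F) (hu : u ∈ Ioo 0 1) : quantile F u ≤ x ↔ u ≤ F x :=
  ⟨fun h => (hF.le_apply_quantile hu).trans (hF.1 h),
    fun h => csInf_le (hF.bddBelow_setOf_le hu.1) h⟩

lemma lt_quantile_iff (hF : IsCDF F) (hu : u ∈ Ioo 0 1) : x < quantile F u ↔ F x < u :=
  lt_iff_lt_of_le_iff_le (hF.quantile_le_iff hu)

lemma monotoneOn_quantile (hF : IsCDF F) : MonotoneOn (quantile F) (Ioo 0 1) :=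
  fun _ hu _ hv huv => (hF.quantile_le_iff hu).2 (huv.trans (hF.le_apply_quantile hv))

lemma aemeasurable_quantile (hF : IsCDF F) :
    AEMeasurable (quantile F) (volume.restrict (Ioo 0 1)) :=
  aemeasurable_restrict_of_monotoneOn measurableSet_Ioo hF.monotoneOn_quantile

lemma le_quantile_of_apply_lt (hF : IsCDF F) (hu : u ∈ Ioo 0 1) (h : F k < u) :
    k ≤ quantile F u :=
  le_of_forall_lt fun _ hx => (hF.lt_quantile_iff hu).2 ((hF.1 hx.le).trans_lt h)

lemma apply_le_of_le_quantile (hF : IsCDF F) (hu : u ∈ Ioo 0 1)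
    (hc : ContinuousWithinAt F (Iio k) k) (h : k ≤ quantile F u) : F k ≤ u := by
  refine le_of_tendsto hc ?_
  filter_upwards [self_mem_nhdsWithin] with x hx
  exact ((hF.lt_quantile_iff hu).1 (lt_of_lt_of_le hx h)).le

end IsCDF

lemma quantile_le_and_le_quantile_iff {F₀ F₁ : ℝ → ℝ} (hF₀ : IsCDF F₀) (hF₁ : IsCDF F₁)
    {k u : ℝ} (hc : ContinuousWithinAt F₀ (Iio k) k) (hu : u ∈ Ioo 0 1) (hu₀ : u ≠ F₀ k) :
    quantile F₁ u ≤ k ∧ k ≤ quantile F₀ u ↔ u ∈ Ioc (F₀ k) (F₁ k) := by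
  rw [hF₁.quantile_le_iff hu, mem_Ioc, and_comm]
  exact and_congr_left' ⟨fun h => (hF₀.apply_le_of_le_quantile hu hc h).lt_of_ne' hu₀,
    hF₀.le_quantile_of_apply_lt hu⟩

section LogConcaveTangent

variable {F : ℝ → ℝ} {f k u : ℝ}

lemma IsCDF.le_quantile_of_concaveOn_log (hF : IsCDF F)
    (hlc : ConcaveOn ℝ {x | 0 < F x} (fun x => log (F x)))
    (hk : 0 < F k) (hf : 0 < f) (hd : HasDerivAt F f k) (hu : u ∈ Ioo 0 1) :
    k + F k / f * log (u / F k) ≤ quantile F u := by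
  refine le_csInf (hF.nonempty_setOf_le hu.2) fun x hx => ?_
  have htan := hlc.le_tangent_of_hasDerivAt hk (hu.1.trans_le hx) (hd.log hk.ne')
  have hlog : log (u / F k) ≤ f / F k * (x - k) := by
    rw [log_div hu.1.ne' hk.ne']
    linarith [log_le_log hu.1 hx]
  calc k + F k / f * log (u / F k) ≤ k + F k / f * (f / F k * (x - k)) := by gcongr
    _ = x := by field_simp; ring

lemma IsCDF.quantile_le_of_concaveOn_log_one_sub (hF : IsCDF F)
    (hlc : ConcaveOn ℝ {x | F x < 1} (fun x => log (1 - F x)))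
    (hk : F k < 1) (hf : 0 < f) (hd : HasDerivAt F f k) (hu : u ∈ Ioo 0 1) :
    quantile F u ≤ k - (1 - F k) / f * log ((1 - u) / (1 - F k)) := by
  set x := k - (1 - F k) / f * log ((1 - u) / (1 - F k))
  rw [hF.quantile_le_iff hu]
  by_contra! hx
  have hk' : 0 < 1 - F k := by linarith
  have hu' : 0 < 1 - u := by linarith [hu.2]
  have htan := hlc.le_tangent_of_hasDerivAt hk (hx.trans hu.2) ((hd.const_sub 1).log hk'.ne')
  have hx' : -f / (1 - F k) * (x - k) = log (1 - u) - log (1 - F k) := by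
    rw [← log_div hu'.ne' hk'.ne']
    simp only [x]
    field_simp
    ring
  rw [hx'] at htan
  linarith [log_lt_log hu' (by linarith : 1 - u < 1 - F x)]

end LogConcaveTangent

section UniformPushforward

variable {Ω : Type*} [MeasurableSpace Ω] {μ : Measure Ω} {U : Ω → ℝ}

lemma ae_mem_Ioo_and_ne_of_map_eq (hU : Measurable U)
    (hUnif : μ.map U = volume.restrict (Ioo 0 1)) (a : ℝ) :
    ∀ᵐ ω ∂μ, U ω ∈ Ioo 0 1 ∧ U ω ≠ a := by
  refine ae_of_ae_map (p := fun u => u ∈ Ioo 0 1 ∧ u ≠ a) hU.aemeasurable ?_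
  rw [hUnif]
  exact (ae_restrict_mem measurableSet_Ioo).and (ae_restrict_of_ae (volume.ae_ne a))

lemma measure_preimage_of_map_eq (hU : Measurable U)
    (hUnif : μ.map U = volume.restrict (Ioo 0 1)) {s : Set ℝ} (hs : MeasurableSet s)
    (hs01 : s ⊆ Ioo 0 1) : μ (U ⁻¹' s) = volume s := by
  rw [← Measure.map_apply hU hs, hUnif, Measure.restrict_apply hs, inter_eq_left.2 hs01]

lemma setIntegral_preimage_of_map_eq (hU : Measurable U)
    (hUnif : μ.map U = volume.restrict (Ioo 0 1)) {f : ℝ → ℝ}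
    (hf : AEStronglyMeasurable f (volume.restrict (Ioo 0 1))) {s : Set ℝ} (hs : MeasurableSet s)
    (hs01 : s ⊆ Ioo 0 1) : ∫ ω in U ⁻¹' s, f (U ω) ∂μ = ∫ u in s, f u := by
  rw [← setIntegral_map hs (hUnif ▸ hf) hU.aemeasurable, hUnif, Measure.restrict_restrict hs,
    inter_eq_left.2 hs01]

end UniformPushforward

lemma intervalIntegrable_log_div {p q r : ℝ} (hp : 0 < p) (hq : 0 < q) (hr : 0 < r) :
    IntervalIntegrable (fun v => log (v / r)) volume p q :=
  (ContinuousOn.log (by fun_prop) fun _ hv =>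
    (div_pos ((lt_min hp hq).trans_le hv.1) hr).ne').intervalIntegrable

lemma intervalIntegrable_log_one_sub_div {a c r : ℝ} (ha : a < 1) (hc : c < 1) (hr : 0 < r) :
    IntervalIntegrable (fun u => log ((1 - u) / r)) volume a c := by
  simpa using (intervalIntegrable_log_div (sub_pos.2 ha) (sub_pos.2 hc) hr).comp_sub_left 1

lemma integral_log_div {p q : ℝ} (hp : 0 < p) (hq : 0 < q) :
    ∫ v in p..q, log (v / p) = q * log (q / p) - (q - p) := by
  rw [intervalIntegral.integral_congr fun v hv =>
      log_div ((lt_min hp hq).trans_le hv.1).ne' hp.ne',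
    intervalIntegral.integral_sub intervalIntegral.intervalIntegrable_log' intervalIntegrable_const,
    integral_log, intervalIntegral.integral_const, log_div hq.ne' hp.ne', smul_eq_mul]
  ring

lemma mul_g_eq_integral {a b x : ℝ} (ha : 0 < a) (hax : 0 < a + x) :
    x * g a b x = a / b * ∫ v in a..a + x, log (v / a) := by
  rw [integral_log_div ha hax, g]
  rcases eq_or_ne x 0 with rfl | hx
  · simp
  · rw [show 1 + x / a = (a + x) / a by field_simp]
    field_simp
    ring

lemma integral_tangent_bounds_eq {a c : ℝ} (ha : 0 < a) (hac : a ≤ c) (hc : c < 1) (b₀ b₁ : ℝ) :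
    ∫ u in a..c, (a / b₀ * log (u / a) + (1 - c) / b₁ * log ((1 - u) / (1 - c)))
      = (c - a) * (g a b₀ (c - a) + g (1 - c) b₁ (c - a)) := by
  have hint₀ := intervalIntegrable_log_div ha (ha.trans_le hac) ha
  have hint₁ := intervalIntegrable_log_one_sub_div (hac.trans_lt hc) hc (sub_pos.2 hc)
  rw [intervalIntegral.integral_add (hint₀.const_mul _) (hint₁.const_mul _),
    intervalIntegral.integral_const_mul, intervalIntegral.integral_const_mul,
    intervalIntegral.integral_comp_sub_left (fun v => log (v / (1 - c))), mul_add,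
    mul_g_eq_integral ha (by linarith), mul_g_eq_integral (by linarith) (by linarith),
    add_sub_cancel, show 1 - c + (c - a) = 1 - a by ring]

theorem stmt9_general {Ω : Type*} [MeasurableSpace Ω] (μ : Measure Ω)
    (U : Ω → ℝ) (hU : Measurable U)
    (hUnif : μ.map U = volume.restrict (Set.Ioo (0 : ℝ) 1))
    (F0 F1 : ℝ → ℝ) (hF0 : IsCDF F0) (hF1 : IsCDF F1)
    (h0 h1 : Ω → ℝ)
    (hh0 : h0 = fun ω => quantile F0 (U ω))
    (hh1 : h1 = fun ω => quantile F1 (U ω))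
    (k f0 f1 : ℝ)
    (hF0k : F0 k ∈ Set.Ioo (0 : ℝ) 1) (hf0 : 0 < f0)
    (hd0 : HasDerivAt F0 f0 k)
    (hlc0 : ConcaveOn ℝ {x | 0 < F0 x} (fun x => Real.log (F0 x)))
    (hF1k : F1 k ∈ Set.Ioo (0 : ℝ) 1) (hf1 : 0 < f1)
    (hd1 : HasDerivAt F1 f1 k)
    (hlc1 : ConcaveOn ℝ {x | F1 x < 1} (fun x => Real.log (1 - F1 x)))
    (hB : 0 < F1 k - F0 k) :
    g (F0 k) f0 (F1 k - F0 k) + g (1 - F1 k) f1 (F1 k - F0 k)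
      ≤ (∫ ω in {ω | h1 ω ≤ k ∧ k ≤ h0 ω}, (h0 ω - h1 ω) ∂μ)
          / (μ {ω | h1 ω ≤ k ∧ k ≤ h0 ω}).toReal := by
  subst hh0 hh1
  beta_reduce
  have hac : F0 k ≤ F1 k := by linarith
  have hIcc : Icc (F0 k) (F1 k) ⊆ Ioo 0 1 := fun u hu =>
    ⟨hF0k.1.trans_le hu.1, hu.2.trans_lt hF1k.2⟩
  have hIoc := Ioc_subset_Icc_self.trans hIcc
  have hS : {ω | quantile F1 (U ω) ≤ k ∧ k ≤ quantile F0 (U ω)}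
      =ᵐ[μ] U ⁻¹' Ioc (F0 k) (F1 k) := by
    filter_upwards [ae_mem_Ioo_and_ne_of_map_eq hU hUnif (F0 k)] with ω hω
    exact propext (quantile_le_and_le_quantile_iff hF0 hF1 hd0.continuousAt.continuousWithinAt
      hω.1 hω.2)
  have hmeas : AEStronglyMeasurable (fun u => quantile F0 u - quantile F1 u)
      (volume.restrict (Ioo 0 1)) :=
    (hF0.aemeasurable_quantile.sub hF1.aemeasurable_quantile).aestronglyMeasurable
  rw [measure_congr hS, setIntegral_congr_set hS,
    measure_preimage_of_map_eq hU hUnif measurableSet_Ioc hIoc,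
    setIntegral_preimage_of_map_eq hU hUnif hmeas measurableSet_Ioc hIoc,
    ← intervalIntegral.integral_of_le hac, Real.volume_Ioc, ENNReal.toReal_ofReal hB.le,
    le_div_iff₀ hB, mul_comm, ← integral_tangent_bounds_eq hF0k.1 hac hF1k.2]
  refine intervalIntegral.integral_mono_on hac ?_ ?_ fun u hu => ?_
  · exact ((intervalIntegrable_log_div hF0k.1 hF1k.1 hF0k.1).const_mul _).add
      ((intervalIntegrable_log_one_sub_div hF0k.2 hF1k.2 (sub_pos.2 hF1k.2)).const_mul _)
  · rw [← uIcc_of_le hac] at hIcc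
    exact (hF0.monotoneOn_quantile.mono hIcc).intervalIntegrable.sub
      (hF1.monotoneOn_quantile.mono hIcc).intervalIntegrable
  · linarith [hF0.le_quantile_of_concaveOn_log hlc0 hF0k.1 hf0 hd0 (hIcc hu),
      hF1.quantile_le_of_concaveOn_log_one_sub hlc1 hF1k.2 hf1 hd1 (hIcc hu)]

/-- Lower bound `Δ_k^L` of the paper's Theorem 1 (rank-invariant case, no
counterfactual bunchers): under bi-log-concavity conditions (concavity of
`ln F0` and of `ln(1 - F1)`), the buncher ATE `E[h0 - h1 | h1 ≤ k ≤ h0]` is at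
least `g(F0(k), f0(k), B) + g(1 - F1(k), f1(k), B)` where `B = F1(k) - F0(k)`. -/
theorem stmt9 {Ω : Type*} [MeasurableSpace Ω] (μ : Measure Ω)
    [IsProbabilityMeasure μ]
    (U : Ω → ℝ) (hU : Measurable U)
    (hUnif : μ.map U = volume.restrict (Set.Ioo (0 : ℝ) 1))
    (F0 F1 : ℝ → ℝ) (hF0 : IsCDF F0) (hF1 : IsCDF F1)
    (hQle : ∀ u ∈ Set.Ioo (0 : ℝ) 1, quantile F1 u ≤ quantile F0 u)
    (h0 h1 : Ω → ℝ)
    (hh0 : h0 = fun ω => quantile F0 (U ω))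
    (hh1 : h1 = fun ω => quantile F1 (U ω))
    (k f0 f1 : ℝ)
    (hF0k : F0 k ∈ Set.Ioo (0 : ℝ) 1) (hf0 : 0 < f0)
    (hd0 : HasDerivAt F0 f0 k)
    (hlc0 : ConcaveOn ℝ {x | 0 < F0 x} (fun x => Real.log (F0 x)))
    (hF1k : F1 k ∈ Set.Ioo (0 : ℝ) 1) (hf1 : 0 < f1)
    (hd1 : HasDerivAt F1 f1 k)
    (hlc1 : ConcaveOn ℝ {x | F1 x < 1} (fun x => Real.log (1 - F1 x)))
    (hB : 0 < F1 k - F0 k) :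
    g (F0 k) f0 (F1 k - F0 k) + g (1 - F1 k) f1 (F1 k - F0 k)
      ≤ (∫ ω in {ω | h1 ω ≤ k ∧ k ≤ h0 ω}, (h0 ω - h1 ω) ∂μ)
          / (μ {ω | h1 ω ≤ k ∧ k ≤ h0 ω}).toReal :=
  stmt9_general μ U hU hUnif F0 F1 hF0 hF1 h0 h1 hh0 hh1 k f0 f1 hF0k hf0 hd0 hlc0 hF1k hf1 hd1 hlc1
    hB
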